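/- Let p > 1, γ > 1, C > 0, let Ω ⊆ ℝ^N be an open set, and let v, u : Ω → ℝ be C¹ and positive on Ω. Assume that for every nonnegative Lipschitz function φ : ℝ^N → ℝ with compact support contained in Ω one has ∫_Ω ‖∇v‖^{p−2} ⟨∇v, ∇φ⟩ ≤ C ∫_Ω v^{−γ} φ (v is a subsolution) and ∫_Ω ‖∇u‖^{p−2} ⟨∇u, ∇φ⟩ ≥ C ∫_Ω u^{−γ} φ (u is a supersolution), where ∇φ denotes the almost-everywhere defined Fréchet derivative of φ. If ε > 0 is such that the closure of the set {x ∈ Ω : v(x) > u(x) + ε} is compact and contained in Ω, then v ≤ u + ε on Ω. -/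

import Mathlib

/-!
Suppose `v > u + ε` somewhere and test both inequalities with `φ = (v - u - ε)⁺`, which is
Lipschitz with compact support in `Ω` and has gradient `∇v - ∇u` on `S = {v > u + ε}` and `0`
elsewhere. Subtracting them, the monotonicity of `η ↦ |η|^{p-2} η` gives
`∫ u^{-γ} φ ≤ ∫ v^{-γ} φ`; but `v > u` on `S` and `t ↦ t^{-γ}` is decreasing, so the reverse
inequality holds strictly.
-/

open MeasureTheory Set Metric

-- On the compact `1`-thickening of the support `f` is Lipschitz; for a pair of points with one
-- outside it, either both values vanish or `dist x y > 1` and `‖f‖` is bounded.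
theorem LocallyLipschitz.exists_lipschitzWith_of_hasCompactSupport {α β : Type*}
    [PseudoMetricSpace α] [ProperSpace α] [NormedAddCommGroup β] {f : α → β}
    (hf : LocallyLipschitz f) (hsupp : HasCompactSupport f) : ∃ K, LipschitzWith K f := by
  obtain ⟨K, hK⟩ := hf.locallyLipschitzOn.exists_lipschitzOnWith_of_compact
    (hsupp.isCompact.cthickening (r := 1))
  obtain ⟨B, hB⟩ := hf.continuous.bounded_above_of_compact_support hsupp
  have hfar : ∀ x y, y ∉ cthickening 1 (tsupport f) → dist (f x) (f y) ≤ max B 0 * dist x y := by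
    intro x y hy
    have hfy : f y = 0 :=
      image_eq_zero_of_notMem_tsupport fun h => hy (self_subset_cthickening _ h)
    by_cases hx : x ∈ tsupport f
    · have hxy : 1 < dist x y := by
        by_contra! h
        exact hy (mem_cthickening_of_dist_le y x 1 _ hx (dist_comm x y ▸ h))
      rw [hfy, dist_zero_right]
      calc ‖f x‖ ≤ max B 0 := (hB x).trans (le_max_left _ _)
        _ ≤ max B 0 * dist x y := le_mul_of_one_le_right (le_max_right _ _) hxy.le
    · rw [hfy, image_eq_zero_of_notMem_tsupport hx, dist_self]
      positivity
  refine ⟨max K (Real.toNNReal B), LipschitzWith.of_dist_le_mul fun x y => ?_⟩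
  have hKB : (K : ℝ) ≤ max K (Real.toNNReal B) := by exact_mod_cast le_max_left _ _
  have hBK : max B 0 ≤ (max K (Real.toNNReal B) : ℝ) := by
    rw [← Real.coe_toNNReal']; exact_mod_cast le_max_right _ _
  by_cases hy : y ∈ cthickening 1 (tsupport f)
  · by_cases hx : x ∈ cthickening 1 (tsupport f)
    · exact (hK.dist_le_mul x hx y hy).trans (mul_le_mul_of_nonneg_right hKB dist_nonneg)
    · rw [dist_comm, dist_comm x]
      exact (hfar y x hx).trans (mul_le_mul_of_nonneg_right hBK dist_nonneg)
  · exact (hfar x y hy).trans (mul_le_mul_of_nonneg_right hBK dist_nonneg)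

section PLaplace

variable {E : Type*} [NormedAddCommGroup E] [InnerProductSpace ℝ E] {p : ℝ}

theorem rpow_sub_two_mul_self (hp : 1 < p) {x : ℝ} (hx : 0 ≤ x) :
    x ^ (p - 2) * x = x ^ (p - 1) := by
  rw [← Real.rpow_add_one' hx (by linarith)]; ring_nf

-- By Cauchy–Schwarz the inner product is at least `(‖a‖ ^ (p - 1) - ‖b‖ ^ (p - 1)) * (‖a‖ - ‖b‖)`,
-- which is nonnegative since `t ↦ t ^ (p - 1)` is monotone.
theorem inner_rpow_norm_smul_sub_nonneg (hp : 1 < p) (a b : E) :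
    0 ≤ inner ℝ (‖a‖ ^ (p - 2) • a - ‖b‖ ^ (p - 2) • b) (a - b) := by
  have hab : inner ℝ a b ≤ ‖a‖ * ‖b‖ := real_inner_le_norm a b
  have hmono : 0 ≤ (‖a‖ ^ (p - 1) - ‖b‖ ^ (p - 1)) * (‖a‖ - ‖b‖) := by
    rcases le_total ‖a‖ ‖b‖ with h | h
    · exact mul_nonneg_of_nonpos_of_nonpos
        (sub_nonpos.2 (Real.rpow_le_rpow (norm_nonneg a) h (by linarith))) (sub_nonpos.2 h)
    · exact mul_nonneg
        (sub_nonneg.2 (Real.rpow_le_rpow (norm_nonneg b) h (by linarith))) (sub_nonneg.2 h)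
  rw [← rpow_sub_two_mul_self hp (norm_nonneg a), ← rpow_sub_two_mul_self hp (norm_nonneg b)]
    at hmono
  have hweights : 0 ≤ ‖a‖ ^ (p - 2) + ‖b‖ ^ (p - 2) := by positivity
  simp only [inner_sub_left, inner_sub_right, real_inner_smul_left, real_inner_self_eq_norm_sq,
    real_inner_comm a b]
  nlinarith [mul_le_mul_of_nonneg_left hab hweights]

theorem continuous_rpow_norm_smul (hp : 1 < p) : Continuous fun a : E => ‖a‖ ^ (p - 2) • a := by
  rw [continuous_iff_continuousAt]
  intro a
  rcases eq_or_ne a 0 with rfl | ha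
  · have hnorm : ∀ a : E, ‖‖a‖ ^ (p - 2) • a‖ = ‖a‖ ^ (p - 1) := fun a => by
      rw [norm_smul, Real.norm_of_nonneg (by positivity), rpow_sub_two_mul_self hp (norm_nonneg a)]
    rw [ContinuousAt, smul_zero, tendsto_zero_iff_norm_tendsto_zero]
    simp only [hnorm]
    simpa [Real.zero_rpow (by linarith : p - 1 ≠ 0)] using
      (continuous_norm.rpow_const fun _ => Or.inr (by linarith : 0 ≤ p - 1)).tendsto (0 : E)
  · exact (continuous_norm.continuousAt.rpow_const (Or.inl (norm_ne_zero_iff.2 ha))).smul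
      continuousAt_id

theorem setIntegral_inner_rpow_norm_smul_sub_mono {X : Type*} [TopologicalSpace X] [T2Space X]
    [MeasurableSpace X] [OpensMeasurableSpace X] {μ : Measure X} [IsFiniteMeasureOnCompacts μ]
    (hp : 1 < p) {K S : Set X} (hK : IsCompact K) (hS : MeasurableSet S) (hSK : S ⊆ K)
    {a b : X → E} (ha : ContinuousOn a K) (hb : ContinuousOn b K) :
    ∫ x in S, inner ℝ (‖b x‖ ^ (p - 2) • b x) (a x - b x) ∂μ
      ≤ ∫ x in S, inner ℝ (‖a x‖ ^ (p - 2) • a x) (a x - b x) ∂μ := by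
  have hint : ∀ c : X → E, ContinuousOn c K →
      IntegrableOn (fun x => inner ℝ (‖c x‖ ^ (p - 2) • c x) (a x - b x)) S μ := fun c hc =>
    (((continuous_rpow_norm_smul hp).comp_continuousOn hc).inner (ha.sub hb)).integrableOn_compact
      hK |>.mono_set hSK
  refine setIntegral_mono_on (hint b hb) (hint a ha) hS fun x _ => ?_
  have := inner_rpow_norm_smul_sub_nonneg hp (a x) (b x)
  rw [inner_sub_left] at this
  linarith

end PLaplace

structure IsNonnegLipschitzTestFunction {E : Type*} [PseudoMetricSpace E] (U : Set E)
    (φ : E → ℝ) : Prop where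
  lipschitzWith : ∃ K, LipschitzWith K φ
  nonneg : ∀ x, 0 ≤ φ x
  hasCompactSupport : HasCompactSupport φ
  tsupport_subset : tsupport φ ⊆ U

theorem IsNonnegLipschitzTestFunction.continuous {E : Type*} [PseudoMetricSpace E] {U : Set E}
    {φ : E → ℝ} (hφ : IsNonnegLipschitzTestFunction U φ) : Continuous φ :=
  hφ.lipschitzWith.choose_spec.continuous

section PositivePart

variable {α : Type*} {U : Set α} {w : α → ℝ}

theorem indicator_setOf_pos_nonneg (x : α) : 0 ≤ {x ∈ U | 0 < w x}.indicator w x :=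
  indicator_nonneg (fun _ hy => hy.2.le) x

theorem indicator_setOf_pos_eq_max {x : α} (hx : x ∈ U) :
    {x ∈ U | 0 < w x}.indicator w x = max (w x) 0 := by
  by_cases hw : 0 < w x
  · rw [indicator_of_mem (show x ∈ {x ∈ U | 0 < w x} from ⟨hx, hw⟩), max_eq_left hw.le]
  · rw [indicator_of_notMem fun h => hw h.2, max_eq_right (not_lt.1 hw)]

end PositivePart

section TestFunction

variable {E : Type*} [NormedAddCommGroup E] {U : Set E} {w : E → ℝ}

theorem locallyLipschitz_indicator_setOf_pos [NormedSpace ℝ E] (hU : IsOpen U)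
    (hw : ContDiffOn ℝ 1 w U) (hsupp : closure {x ∈ U | 0 < w x} ⊆ U) :
    LocallyLipschitz ({x ∈ U | 0 < w x}.indicator w) := by
  intro x
  by_cases hx : x ∈ U
  · obtain ⟨K, t, ht, hK⟩ := (hw.contDiffAt (hU.mem_nhds hx)).exists_lipschitzOnWith
    refine ⟨K, t ∩ U, Filter.inter_mem ht (hU.mem_nhds hx),
      LipschitzOnWith.of_dist_le_mul fun y hy z hz => ?_⟩
    rw [indicator_setOf_pos_eq_max hy.2, indicator_setOf_pos_eq_max hz.2, Real.dist_eq]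
    exact (abs_max_sub_max_le_abs _ _ _).trans (hK.dist_le_mul y hy.1 z hz.1)
  · refine ⟨0, (closure {x ∈ U | 0 < w x})ᶜ,
      isClosed_closure.isOpen_compl.mem_nhds fun h => hx (hsupp h),
      LipschitzOnWith.of_dist_le_mul fun y hy z hz => ?_⟩
    rw [indicator_of_notMem fun h => hy (subset_closure h),
      indicator_of_notMem fun h => hz (subset_closure h), dist_self]
    positivity

theorem isNonnegLipschitzTestFunction_indicator_setOf_pos [NormedSpace ℝ E] [ProperSpace E]
    (hU : IsOpen U) (hw : ContDiffOn ℝ 1 w U) (hK : IsCompact (closure {x ∈ U | 0 < w x}))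
    (hKU : closure {x ∈ U | 0 < w x} ⊆ U) :
    IsNonnegLipschitzTestFunction U ({x ∈ U | 0 < w x}.indicator w) := by
  have htsupport : tsupport ({x ∈ U | 0 < w x}.indicator w) ⊆ closure {x ∈ U | 0 < w x} :=
    closure_mono support_indicator_subset
  have hcompact := hK.of_isClosed_subset (isClosed_tsupport _) htsupport
  exact ⟨(locallyLipschitz_indicator_setOf_pos hU hw hKU).exists_lipschitzWith_of_hasCompactSupport
    hcompact, indicator_setOf_pos_nonneg, hcompact, htsupport.trans hKU⟩

variable [InnerProductSpace ℝ E] [CompleteSpace E]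

-- Off `{w > 0}` the function vanishes at a global minimum, so its gradient is `0` there
-- whether or not it is differentiable.
theorem gradient_indicator_setOf_pos (hU : IsOpen U) (hw : ContinuousOn w U) :
    gradient ({x ∈ U | 0 < w x}.indicator w) = {x ∈ U | 0 < w x}.indicator (gradient w) := by
  funext x
  by_cases hx : x ∈ {x ∈ U | 0 < w x}
  · have hopen : IsOpen {x ∈ U | 0 < w x} := hw.isOpen_inter_preimage hU isOpen_Ioi
    rw [indicator_of_mem hx]
    exact (Filter.eventuallyEq_of_mem (hopen.mem_nhds hx) fun y hy =>
      indicator_of_mem hy w).gradient_eq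
  · have hmin : IsLocalMin ({x ∈ U | 0 < w x}.indicator w) x :=
      Filter.Eventually.of_forall fun y => by
        rw [indicator_of_notMem hx]; exact indicator_setOf_pos_nonneg y
    simp [gradient, hmin.fderiv_eq_zero, indicator_of_notMem hx]

theorem gradient_sub_sub_const {f g : E → ℝ} {x : E} (c : ℝ) (hf : DifferentiableAt ℝ f x)
    (hg : DifferentiableAt ℝ g x) :
    gradient (fun y => f y - g y - c) x = gradient f x - gradient g x := by
  simp only [gradient, fderiv_sub_const, fderiv_fun_sub hf hg, map_sub]

theorem ContDiffOn.continuousOn_gradient {f : E → ℝ} (hU : IsOpen U) (hf : ContDiffOn ℝ 1 f U) :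
    ContinuousOn (gradient f) U :=
  (InnerProductSpace.toDual ℝ E).symm.continuous.comp_continuousOn
    (hf.continuousOn_fderiv_of_isOpen hU le_rfl)

end TestFunction

theorem setIntegral_inner_indicator_right {α E : Type*} [MeasurableSpace α] {μ : Measure α}
    [NormedAddCommGroup E] [InnerProductSpace ℝ E] {S U : Set α} (hS : MeasurableSet S)
    (hSU : S ⊆ U) (f g : α → E) :
    ∫ x in U, inner ℝ (f x) (S.indicator g x) ∂μ = ∫ x in S, inner ℝ (f x) (g x) ∂μ := by
  have : (fun x => inner ℝ (f x) (S.indicator g x)) =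
      S.indicator fun x => inner ℝ (f x) (g x) := by
    funext x
    by_cases hx : x ∈ S <;> simp [hx]
  rw [this, setIntegral_indicator hS, inter_eq_right.2 hSU]

theorem setIntegral_rpow_norm_mul_inner_gradient_indicator {E : Type*} [NormedAddCommGroup E]
    [InnerProductSpace ℝ E] [CompleteSpace E] [MeasurableSpace E] [OpensMeasurableSpace E]
    {μ : Measure E} {U : Set E} {w : E → ℝ} (hU : IsOpen U) (hw : ContinuousOn w U) (p : ℝ)
    (a : E → E) :
    ∫ x in U, ‖a x‖ ^ (p - 2) * inner ℝ (a x) (gradient ({x ∈ U | 0 < w x}.indicator w) x) ∂μ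
      = ∫ x in {x ∈ U | 0 < w x}, inner ℝ (‖a x‖ ^ (p - 2) • a x) (gradient w x) ∂μ := by
  simp_rw [← real_inner_smul_left]
  have hS : MeasurableSet {x ∈ U | 0 < w x} :=
    (hw.isOpen_inter_preimage hU isOpen_Ioi).measurableSet
  rw [gradient_indicator_setOf_pos hU hw, setIntegral_inner_indicator_right hS (sep_subset _ _)]

section Integrals

variable {X : Type*} [TopologicalSpace X] [MeasurableSpace X]
  [OpensMeasurableSpace X] {μ : Measure X} {U : Set X}

theorem setIntegral_pos_of_continuousOn [μ.IsOpenPosMeasure] {f : X → ℝ} (hU : IsOpen U)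
    (hf : ContinuousOn f U) (hfi : IntegrableOn f U μ) (hnn : ∀ x ∈ U, 0 ≤ f x) {x₀ : X}
    (hx₀ : x₀ ∈ U) (hpos : 0 < f x₀) : 0 < ∫ x in U, f x ∂μ := by
  rw [setIntegral_pos_iff_support_of_nonneg_ae (ae_restrict_of_forall_mem hU.measurableSet hnn)
    hfi]
  exact ((hf.isOpen_inter_preimage hU isOpen_Ioi).measure_pos μ ⟨x₀, hx₀, hpos⟩).trans_le
    (measure_mono fun x hx => ⟨hx.2.ne', hx.1⟩)

theorem ContinuousOn.integrableOn_mul_of_tsupport_subset [T2Space X] [IsFiniteMeasureOnCompacts μ]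
    {f φ : X → ℝ} (hU : MeasurableSet U) (hf : ContinuousOn f U) (hφ : Continuous φ)
    (hφc : HasCompactSupport φ) (hφU : tsupport φ ⊆ U) :
    IntegrableOn (fun x => f x * φ x) U μ :=
  (((hf.mul hφ.continuousOn).mono hφU).integrableOn_compact hφc).of_forall_sdiff_eq_zero hU
    fun x hx => by simp [image_eq_zero_of_notMem_tsupport hx.2]

theorem setIntegral_mul_lt_setIntegral_mul [T2Space X] [μ.IsOpenPosMeasure]
    [IsFiniteMeasureOnCompacts μ] {f g φ : X → ℝ} (hU : IsOpen U) (hf : ContinuousOn f U)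
    (hg : ContinuousOn g U) (hφ : Continuous φ) (hφc : HasCompactSupport φ)
    (hφU : tsupport φ ⊆ U) (hφ0 : ∀ x, 0 ≤ φ x) (hfg : ∀ x ∈ U, 0 < φ x → f x ≤ g x)
    {x₀ : X} (hx₀ : x₀ ∈ U) (hφx₀ : 0 < φ x₀) (hfgx₀ : f x₀ < g x₀) :
    ∫ x in U, f x * φ x ∂μ < ∫ x in U, g x * φ x ∂μ := by
  have hint := fun h (hh : ContinuousOn h U) =>
    hh.integrableOn_mul_of_tsupport_subset (μ := μ) hU.measurableSet hφ hφc hφU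
  rw [← sub_pos, ← integral_sub (hint g hg) (hint f hf)]
  simp_rw [← sub_mul]
  refine setIntegral_pos_of_continuousOn hU ((hg.sub hf).mul hφ.continuousOn)
    (hint _ (hg.sub hf)) (fun x hx => ?_) hx₀ (mul_pos (sub_pos.2 hfgx₀) hφx₀)
  rcases (hφ0 x).eq_or_lt with h | h
  · simp [← h]
  · exact mul_nonneg (sub_nonneg.2 (hfg x hx h)) h.le

end Integrals

theorem weak_comparison_principle_general
    (N : ℕ) (p γ C : ℝ) (hp : 1 < p) (hγ : 1 < γ) (hC : 0 < C)
    (Ω : Set (EuclideanSpace ℝ (Fin N))) (hΩ : IsOpen Ω)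
    (v u : EuclideanSpace ℝ (Fin N) → ℝ)
    -- `v` and `u` are C¹ and positive on `Ω`
    (hv_C1 : ContDiffOn ℝ 1 v Ω) (hv_pos : ∀ x ∈ Ω, 0 < v x)
    (hu_C1 : ContDiffOn ℝ 1 u Ω) (hu_pos : ∀ x ∈ Ω, 0 < u x)
    -- `v` is a distributional subsolution of `−Δ_p v = C v^{−γ}` in `Ω`
    (hv_sub : ∀ φ : EuclideanSpace ℝ (Fin N) → ℝ, (∃ K : NNReal, LipschitzWith K φ) →
      (∀ x, 0 ≤ φ x) → HasCompactSupport φ → tsupport φ ⊆ Ω →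
      ∫ x in Ω, ‖gradient v x‖ ^ (p - 2) * (inner ℝ (gradient v x) (gradient φ x) : ℝ)
        ≤ C * ∫ x in Ω, v x ^ (-γ) * φ x)
    -- `u` is a distributional supersolution of `−Δ_p u = C u^{−γ}` in `Ω`
    (hu_super : ∀ φ : EuclideanSpace ℝ (Fin N) → ℝ, (∃ K : NNReal, LipschitzWith K φ) →
      (∀ x, 0 ≤ φ x) → HasCompactSupport φ → tsupport φ ⊆ Ω →
      C * ∫ x in Ω, u x ^ (-γ) * φ x
        ≤ ∫ x in Ω, ‖gradient u x‖ ^ (p - 2) * (inner ℝ (gradient u x) (gradient φ x) : ℝ))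
    -- the set `{v > u + ε}` has compact closure contained in `Ω`
    (ε : ℝ) (hε : 0 < ε)
    (h_cpt : IsCompact (closure {x ∈ Ω | u x + ε < v x}))
    (h_sub : closure {x ∈ Ω | u x + ε < v x} ⊆ Ω) :
    ∀ x ∈ Ω, v x ≤ u x + ε := by
  by_contra! ⟨x₀, hx₀Ω, hx₀⟩
  set w := fun x => v x - u x - ε
  set S := {x ∈ Ω | 0 < w x}
  have hS : {x ∈ Ω | u x + ε < v x} = S := by
    ext x; simp only [S, w, mem_ofPred_eq, sub_sub, sub_pos]
  rw [hS] at h_cpt h_sub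
  have hx₀S : x₀ ∈ S := hS ▸ ⟨hx₀Ω, hx₀⟩
  have hw : ContDiffOn ℝ 1 w Ω := (hv_C1.sub hu_C1).sub contDiffOn_const
  have hS_meas : MeasurableSet S :=
    (hw.continuousOn.isOpen_inter_preimage hΩ isOpen_Ioi).measurableSet
  have hφ := isNonnegLipschitzTestFunction_indicator_setOf_pos hΩ hw h_cpt h_sub
  have hflux : ∀ f : EuclideanSpace ℝ (Fin N) → ℝ,
      ∫ x in Ω, ‖gradient f x‖ ^ (p - 2) * inner ℝ (gradient f x) (gradient (S.indicator w) x)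
        = ∫ x in S, inner ℝ (‖gradient f x‖ ^ (p - 2) • gradient f x)
            (gradient v x - gradient u x) := fun f => by
    rw [setIntegral_rpow_norm_mul_inner_gradient_indicator hΩ hw.continuousOn]
    refine setIntegral_congr_fun hS_meas fun x hx => ?_
    rw [gradient_sub_sub_const ε ((hv_C1.differentiableOn one_ne_zero).differentiableAt
      (hΩ.mem_nhds hx.1)) ((hu_C1.differentiableOn one_ne_zero).differentiableAt
      (hΩ.mem_nhds hx.1))]
  have hsource :
      ∫ x in Ω, u x ^ (-γ) * S.indicator w x ≤ ∫ x in Ω, v x ^ (-γ) * S.indicator w x := by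
    refine le_of_mul_le_mul_left ?_ hC
    calc C * ∫ x in Ω, u x ^ (-γ) * S.indicator w x
        ≤ ∫ x in S, inner ℝ (‖gradient u x‖ ^ (p - 2) • gradient u x)
            (gradient v x - gradient u x) :=
          hflux u ▸ hu_super _ hφ.lipschitzWith hφ.nonneg hφ.hasCompactSupport hφ.tsupport_subset
      _ ≤ ∫ x in S, inner ℝ (‖gradient v x‖ ^ (p - 2) • gradient v x)
            (gradient v x - gradient u x) :=
          setIntegral_inner_rpow_norm_smul_sub_mono hp h_cpt hS_meas subset_closure
            ((hv_C1.continuousOn_gradient hΩ).mono h_sub)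
            ((hu_C1.continuousOn_gradient hΩ).mono h_sub)
      _ ≤ C * ∫ x in Ω, v x ^ (-γ) * S.indicator w x :=
          hflux v ▸ hv_sub _ hφ.lipschitzWith hφ.nonneg hφ.hasCompactSupport hφ.tsupport_subset
  have hrpow_cont : ∀ f : EuclideanSpace ℝ (Fin N) → ℝ, ContDiffOn ℝ 1 f Ω →
      (∀ x ∈ Ω, 0 < f x) → ContinuousOn (fun x => f x ^ (-γ)) Ω := fun f hf hpos =>
    hf.continuousOn.rpow_const fun x hx => Or.inl (hpos x hx).ne'
  have hrpow_anti : ∀ x ∈ S, v x ^ (-γ) < u x ^ (-γ) := fun x hx =>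
    Real.rpow_lt_rpow_of_neg (hu_pos x hx.1) (by linarith [hx.2]) (by linarith)
  exact (setIntegral_mul_lt_setIntegral_mul hΩ (hrpow_cont v hv_C1 hv_pos)
    (hrpow_cont u hu_C1 hu_pos) hφ.continuous hφ.hasCompactSupport hφ.tsupport_subset hφ.nonneg
    (fun x _ hx => (hrpow_anti x (mem_of_indicator_ne_zero hx.ne')).le) hx₀Ω
    ((indicator_of_mem hx₀S w).symm ▸ hx₀S.2) (hrpow_anti x₀ hx₀S)).not_ge hsource

/-- **Weak comparison principle** (used twice in the proof of Lemma 2.3). Let `v` be a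
C¹ positive distributional subsolution and `u` a C¹ positive distributional
supersolution of `−Δ_p w = C w^{−γ}` in an open set `Ω` (tested against nonnegative
Lipschitz functions with compact support in `Ω`). If `ε > 0` is such that the closure of
`{v > u + ε}` is compact and contained in `Ω`, then `v ≤ u + ε` on `Ω`. -/
theorem weak_comparison_principle
    (N : ℕ) (hN : 2 ≤ N) (p γ C : ℝ) (hp : 1 < p) (hγ : 1 < γ) (hC : 0 < C)
    (Ω : Set (EuclideanSpace ℝ (Fin N))) (hΩ : IsOpen Ω)
    (v u : EuclideanSpace ℝ (Fin N) → ℝ)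
    -- `v` and `u` are C¹ and positive on `Ω`
    (hv_C1 : ContDiffOn ℝ 1 v Ω) (hv_pos : ∀ x ∈ Ω, 0 < v x)
    (hu_C1 : ContDiffOn ℝ 1 u Ω) (hu_pos : ∀ x ∈ Ω, 0 < u x)
    -- `v` is a distributional subsolution of `−Δ_p v = C v^{−γ}` in `Ω`
    (hv_sub : ∀ φ : EuclideanSpace ℝ (Fin N) → ℝ, (∃ K : NNReal, LipschitzWith K φ) →
      (∀ x, 0 ≤ φ x) → HasCompactSupport φ → tsupport φ ⊆ Ω →
      ∫ x in Ω, ‖gradient v x‖ ^ (p - 2) * (inner ℝ (gradient v x) (gradient φ x) : ℝ)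
        ≤ C * ∫ x in Ω, v x ^ (-γ) * φ x)
    -- `u` is a distributional supersolution of `−Δ_p u = C u^{−γ}` in `Ω`
    (hu_super : ∀ φ : EuclideanSpace ℝ (Fin N) → ℝ, (∃ K : NNReal, LipschitzWith K φ) →
      (∀ x, 0 ≤ φ x) → HasCompactSupport φ → tsupport φ ⊆ Ω →
      C * ∫ x in Ω, u x ^ (-γ) * φ x
        ≤ ∫ x in Ω, ‖gradient u x‖ ^ (p - 2) * (inner ℝ (gradient u x) (gradient φ x) : ℝ))
    -- the set `{v > u + ε}` has compact closure contained in `Ω`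
    (ε : ℝ) (hε : 0 < ε)
    (h_cpt : IsCompact (closure {x ∈ Ω | u x + ε < v x}))
    (h_sub : closure {x ∈ Ω | u x + ε < v x} ⊆ Ω) :
    ∀ x ∈ Ω, v x ≤ u x + ε :=
  weak_comparison_principle_general N p γ C hp hγ hC Ω hΩ v u hv_C1 hv_pos hu_C1 hu_pos hv_sub
    hu_super ε hε h_cpt h_sub
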